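/- arXiv:1307.3207 — 7 statements merged into one kernel-verified Lean document; each statement's English description precedes it below -/
import Mathlib

section
/- No deterministic fetch-and-increment counter can be both available and partition tolerant while quiescently consistent. Precisely: model a two-node system with nodes u and v, where the value returned by an increment at a node is a deterministic function of that node's local history (its previous local operations and the messages it has received). Consider runs in which the network is partitioned, i.e., no messages are ever delivered, and in which every increment returns (availability). Then there are no return-value functions f_u, f_v (from local histories to natural numbers) such that quiescent consistency holds in both of the following runs: run A, in which u performs one increment, the system reaches quiescence, and then v performs one increment; and run B, in which only v performs one increment. (Quiescent consistency of u's increment in run A forces f_u to return 0; quiescent consistency after both operations in run A forces f_v to return 1; but in run B v has the same local history as in run A, so f_v again returns 1, contradicting quiescent consistency of run B, which requires the sole increment to return 0.) -/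
/-- Local histories of a node.  In a partitioned run no messages are ever
delivered, so a node's local history is just the (finite) sequence of its own
previous local operations (recorded here by their return values). -/
abbrev LocalHistory := List ℕ

/-- No deterministic fetch-and-increment counter on two nodes `u` and `v` can
be available, partition tolerant and quiescently consistent.  The value
returned by an increment at a node is a deterministic function (`f_u`, `f_v`)
of that node's local history; in a partitioned run every increment returns
(availability) and no messages are delivered.  There are no such functions
making quiescent consistency hold both in run A (u increments once, quiescence,
then v increments once) and in run B (v alone increments once): quiescent
consistency requires, as multisets, that after `n` increments the returned
values are exactly `{0, …, n-1}`. -/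
theorem no_quiescently_consistent_available_partition_tolerant_counter :
    ¬ ∃ (f_u f_v : LocalHistory → ℕ),
      -- Run A, quiescent state after u's single increment (history empty):
      ({f_u []} : Multiset ℕ) = {0} ∧
      -- Run A, quiescent state after u's and then v's increments
      -- (v's history is empty: no messages were delivered):
      ({f_u [], f_v []} : Multiset ℕ) = {0, 1} ∧
      -- Run B, quiescent state after v's single increment (history empty):
      ({f_v []} : Multiset ℕ) = {0} := by
  rintro ⟨f_u, f_v, h1, h2, h3⟩
  have hu : f_u [] = 0 := by simpa using h1
  have hv : f_v [] = 0 := by simpa using h3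
  rw [hu, hv] at h2
  have : (1 : ℕ) ∈ ({0, 0} : Multiset ℕ) := h2 ▸ by simp
  simp at this
end

section
/- In the abstract slot dynamics of the Handoff Counter mechanism, any slot identified by a quadruple (s, d, sck, dck) is created at most once: at most one step of any execution adds the entry s ↦ (sck, dck) to slots_d. -/
/-- The part of a Handoff Counter node state relevant to slot dynamics at a
destination node `d`: its destination clock and its map of slots (a slot
`(s, d, sck, dck)` exists when `slots s = some (sck, dck)`). -/
structure SlotState (ι : Type) where
  dck : ℕ
  slots : ι → Option (ℕ × ℕ)

/-- A step of the abstract slot dynamics at node `d`: either leave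
`(dck, slots)` unchanged, remove entries from `slots`, or create a slot
`s ↦ (sck, dck)` for a source `s` not in the domain of `slots`, using the
current destination clock and incrementing it. -/
inductive SlotStep {ι : Type} [DecidableEq ι] : SlotState ι → SlotState ι → Prop
  | skip (st : SlotState ι) : SlotStep st st
  | remove (st : SlotState ι) (slots' : ι → Option (ℕ × ℕ))
      (h : ∀ s, slots' s = st.slots s ∨ slots' s = none) :
      SlotStep st ⟨st.dck, slots'⟩
  | create (st : SlotState ι) (s : ι) (sck : ℕ) (h : st.slots s = none) :
      SlotStep st ⟨st.dck + 1, Function.update st.slots s (some (sck, st.dck))⟩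

/-- An execution of the slot dynamics at node `d`: initially the destination
clock is `0` and there are no slots, and consecutive states are related by
steps. -/
def SlotExec {ι : Type} [DecidableEq ι] (st : ℕ → SlotState ι) : Prop :=
  (st 0).dck = 0 ∧ (∀ s, (st 0).slots s = none) ∧
    ∀ n, SlotStep (st n) (st (n + 1))

/-- Step `n` creates the slot `(s, d, sck, dck)`: it adds the entry
`s ↦ (sck, dck)` to the slots map. -/
def CreatesSlot {ι : Type} (st : ℕ → SlotState ι) (s : ι) (sck dck : ℕ)
    (n : ℕ) : Prop :=
  (st n).slots s ≠ some (sck, dck) ∧ (st (n + 1)).slots s = some (sck, dck)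

theorem SlotStep.dck_le {ι : Type} [DecidableEq ι] {a b : SlotState ι}
    (h : SlotStep a b) : a.dck ≤ b.dck := by
  cases h with
  | skip => exact le_refl _
  | remove slots' h => exact le_refl _
  | create s' sck' h => exact Nat.le_succ _

theorem SlotStep.create_inv {ι : Type} [DecidableEq ι] {a b : SlotState ι}
    (h : SlotStep a b) {s : ι} {sck dck : ℕ}
    (hne : a.slots s ≠ some (sck, dck)) (heq : b.slots s = some (sck, dck)) :
    a.dck = dck ∧ b.dck = dck + 1 := by
  cases h with
  | skip => exact absurd heq hne
  | remove slots' h =>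
    rcases h s with h' | h' <;> simp [h'] at heq
    exact absurd heq hne
  | create s' sck' h =>
    by_cases hs : s' = s
    · subst hs
      simp [Function.update_self] at heq
      obtain ⟨h1, h2⟩ := heq
      subst h2
      exact ⟨rfl, rfl⟩
    · simp [Function.update_of_ne (Ne.symm hs) _ _] at heq
      exact absurd heq hne

/-- Any slot identified by a quadruple `(s, d, sck, dck)` is created at most
once: at most one step of any execution adds the entry `s ↦ (sck, dck)` to
`slots_d`.  (Node identifiers are globally unique, so distinct nodes never
create slots with the same destination component `d`; hence it suffices to
consider the dynamics at a single node `d`.) -/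
theorem slot_created_at_most_once {ι : Type} [DecidableEq ι]
    (st : ℕ → SlotState ι) (hexec : SlotExec st)
    (s : ι) (sck dck : ℕ) (m n : ℕ)
    (hm : CreatesSlot st s sck dck m) (hn : CreatesSlot st s sck dck n) :
    m = n := by
  obtain ⟨-, -, hstep⟩ := hexec
  -- dck is monotone
  have mono : ∀ k, (st k).dck ≤ (st (k + 1)).dck := fun k => (hstep k).dck_le
  have mono' : ∀ a b, a ≤ b → (st a).dck ≤ (st b).dck := by
    intro a b hab
    induction b with
    | zero => simp_all
    | succ b ih =>
      rcases Nat.lt_or_ge a (b + 1) with h | h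
      · exact le_trans (ih (Nat.lt_succ_iff.mp h)) (mono b)
      · have : a = b + 1 := le_antisymm hab h
        simp [this]
  -- a creating step fixes the clock
  have key : ∀ k, CreatesSlot st s sck dck k →
      (st k).dck = dck ∧ (st (k + 1)).dck = dck + 1 := by
    intro k ⟨hne, heq⟩
    exact (hstep k).create_inv hne heq
  obtain ⟨hm1, hm2⟩ := key m hm
  obtain ⟨hn1, hn2⟩ := key n hn
  by_contra hmn
  rcases Nat.lt_or_ge m n with h | h
  · have := mono' (m + 1) n h
    omega
  · have hlt : n < m := lt_of_le_of_ne h (Ne.symm (by omega))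
    have := mono' (n + 1) m hlt
    omega
end

section
/- In the abstract token dynamics of the Handoff Counter mechanism, any token identified by a quadruple (s, d, sck, dck) is created at most once: at most one step of any execution creates a token whose identifier is (s, d, sck, dck). -/
/-- An execution of the abstract token dynamics of the Handoff Counter
mechanism at a source node `s` (node ids are globally unique, so distinct
nodes never create tokens with the same source component `s`, and it suffices
to consider a single source node).  `sck n` is the source clock of `s` just
before step `n`; at step `n` the node either creates no token
(`create n = none`, clock unchanged) or creates the token identified by
`(s, d, sck n, dck)` where `create n = some (d, dck)`, using the current
source clock as third component and incrementing the clock. -/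
structure TokenExec (ι : Type) where
  sck : ℕ → ℕ
  create : ℕ → Option (ι × ℕ)
  init : sck 0 = 0
  step : ∀ n, (create n = none ∧ sck (n + 1) = sck n) ∨
              (create n ≠ none ∧ sck (n + 1) = sck n + 1)

/-- Step `n` creates the token identified by the quadruple
`(s, d, sckv, dck)`. -/
def CreatesToken {ι : Type} (e : TokenExec ι) (d : ι) (sckv dck : ℕ)
    (n : ℕ) : Prop :=
  e.create n = some (d, dck) ∧ e.sck n = sckv

lemma sck_mono {ι : Type} (e : TokenExec ι) : Monotone e.sck := by
  apply monotone_nat_of_le_succ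
  intro n
  rcases e.step n with ⟨_, h⟩ | ⟨_, h⟩ <;> omega

/-- Any token identified by a quadruple `(s, d, sck, dck)` is created at most
once: at most one step of any execution creates a token with that
identifier. -/
theorem token_created_at_most_once {ι : Type} (e : TokenExec ι)
    (d : ι) (sckv dck : ℕ) (m n : ℕ)
    (hm : CreatesToken e d sckv dck m) (hn : CreatesToken e d sckv dck n) :
    m = n := by
  by_contra hne
  wlog h : m < n generalizing m n
  · exact this n m hn hm (Ne.symm hne) (by omega)
  have hstep : e.sck (m + 1) = e.sck m + 1 := by
    rcases e.step m with ⟨h1, _⟩ | ⟨_, h2⟩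
    · rw [hm.1] at h1; simp at h1
    · exact h2
  have := sck_mono e (show m + 1 ≤ n by omega)
  have := hm.2; have := hn.2
  omega
end

section
/- In the conservation transition system for Handoff Counters, for each tier bound k, the cumulative tier value CTV is non-decreasing: for any step transforming configuration C into configuration C′, CTV_C(k) ≤ CTV_{C′}(k). -/
/-- A configuration of the conservation transition system for Handoff
Counters over a (finite) type `ι` of nodes: a value `vals i : ℕ` for each node
`i`, together with a finite collection of enabled tokens, each a pair `(i, n)`
recording its creating node `i` and a value `n`. -/
structure Config (ι : Type) where
  vals : ι → ℕ
  tokens : Multiset (ι × ℕ)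

/-- Labels identifying the kind of a step. -/
inductive Lab (ι : Type) where
  | incr (i : ι)                     -- increment at node `i`
  | create (i : ι)                   -- create a token at node `i`
  | acquire (i : ι) (n : ℕ) (j : ι)  -- node `j` acquires the token `(i, n)`
  | skip                             -- a step changing nothing

/-- `(Lab.isIncr l) = true` iff `l` labels an increment step. -/
def Lab.isIncr {ι : Type} : Lab ι → Bool
  | .incr _ => true
  | _ => false

/-- The labelled step relation of the conservation transition system:
(increment at `i`) `vals i := vals i + 1`;
(create token at `i`, only if `tier i > 0`) add the enabled token
`(i, vals i)` and set `vals i := 0`;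
(acquire) remove an enabled token `(i, n)` and add `n` to `vals j` for some
node `j` with `tier j < tier i`; or a step leaving everything unchanged. -/
inductive Step {ι : Type} [DecidableEq ι] (tier : ι → ℕ) :
    Config ι → Lab ι → Config ι → Prop
  | incr (C : Config ι) (i : ι) :
      Step tier C (.incr i)
        ⟨Function.update C.vals i (C.vals i + 1), C.tokens⟩
  | create (C : Config ι) (i : ι) (h : 0 < tier i) :
      Step tier C (.create i)
        ⟨Function.update C.vals i 0, (i, C.vals i) ::ₘ C.tokens⟩
  | acquire (C : Config ι) (i : ι) (n : ℕ) (j : ι)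
      (hmem : (i, n) ∈ C.tokens) (hj : tier j < tier i) :
      Step tier C (.acquire i n j)
        ⟨Function.update C.vals j (C.vals j + n), C.tokens.erase (i, n)⟩
  | skip (C : Config ι) : Step tier C .skip C

/-- The initial configuration: all `vals` are `0` and there are no enabled
tokens. -/
def initConfig (ι : Type) : Config ι := ⟨fun _ => 0, 0⟩

/-- The cumulative tier value for tier `k` in configuration `C`:
`CTV_C(k) = Σ { vals i : tier i ≤ k } + Σ { n : (i, n) enabled, tier i ≤ k }`. -/
def CTV {ι : Type} [Fintype ι] (tier : ι → ℕ) (C : Config ι) (k : ℕ) : ℕ :=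
  (∑ i, if tier i ≤ k then C.vals i else 0) +
    ((C.tokens.filter (fun t => tier t.1 ≤ k)).map Prod.snd).sum

/-- In the conservation transition system for Handoff Counters, for each tier
bound `k`, the cumulative tier value is non-decreasing along steps: a step
transforming configuration `C` into `C'` has `CTV_C(k) ≤ CTV_{C'}(k)`. -/
theorem CTV_nondecreasing {ι : Type} [Fintype ι] [DecidableEq ι]
    (tier : ι → ℕ) (C C' : Config ι) (l : Lab ι)
    (hstep : Step tier C l C') (k : ℕ) :
    CTV tier C k ≤ CTV tier C' k := by
  classical
  have key : ∀ (v : ι → ℕ) (j : ι) (x : ℕ),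
      (∑ i, if tier i ≤ k then Function.update v j x i else 0) =
      (if tier j ≤ k then x else 0) +
        ∑ i ∈ Finset.univ.erase j, (if tier i ≤ k then v i else 0) := by
    intro v j x
    have hf : (fun i => if tier i ≤ k then Function.update v j x i else 0) =
        Function.update (fun i => if tier i ≤ k then v i else 0) j
          (if tier j ≤ k then x else 0) := by
      funext i
      by_cases h : i = j <;> simp [h, Function.update]
    rw [hf, Finset.sum_update_of_mem (Finset.mem_univ j),
      Finset.sdiff_singleton_eq_erase]
  have split : ∀ (v : ι → ℕ) (j : ι),
      (∑ i, if tier i ≤ k then v i else 0) =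
      (if tier j ≤ k then v j else 0) +
        ∑ i ∈ Finset.univ.erase j, (if tier i ≤ k then v i else 0) := by
    intro v j
    exact (Finset.add_sum_erase _ _ (Finset.mem_univ j)).symm
  cases hstep with
  | incr i =>
      unfold CTV
      simp only [key, split C.vals i]
      gcongr
      split <;> omega
  | create i h =>
      unfold CTV
      simp only [key, split C.vals i, Multiset.filter_cons]
      by_cases hik : tier i ≤ k <;> simp [hik]
      · rw [show (fun x : ι × ℕ => x.2) = Prod.snd from rfl]
        omega
  | acquire i n j hmem hj =>
      unfold CTV
      simp only [key, split C.vals j]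
      have hs := Multiset.cons_erase hmem
      by_cases hik : tier i ≤ k
      · have hjk : tier j ≤ k := le_trans (le_of_lt hj) hik
        have : Multiset.filter (fun t => tier t.1 ≤ k) C.tokens =
            (i, n) ::ₘ Multiset.filter (fun t => tier t.1 ≤ k)
              (C.tokens.erase (i, n)) := by
          conv_lhs => rw [← hs]
          rw [Multiset.filter_cons]
          simp [hik]
        rw [this]
        simp [hjk]
        omega
      · have : Multiset.filter (fun t => tier t.1 ≤ k) C.tokens =
            Multiset.filter (fun t => tier t.1 ≤ k) (C.tokens.erase (i, n)) := by
          conv_lhs => rw [← hs]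
          rw [Multiset.filter_cons]
          simp [hik]
        rw [this]
        split <;> omega
  | skip => exact le_refl _
end

section
/- In the conservation transition system for Handoff Counters, if T is an upper bound on all node tiers (tier_i ≤ T for every node i), then in any configuration C reached by a finite execution from the initial configuration, CTV_C(T) equals the number of increment steps performed in that execution. In other words, the number of increments globally issued equals the sum of the self values vals_i over all nodes plus the sum of the values held in enabled tokens. -/
lemma CTV_all {ι : Type} [Fintype ι] (tier : ι → ℕ) (T : ℕ) (hT : ∀ i, tier i ≤ T)
    (C : Config ι) :
    CTV tier C T = (∑ i, C.vals i) + (C.tokens.map Prod.snd).sum := by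
  unfold CTV
  have h1 : C.tokens.filter (fun t => tier t.1 ≤ T) = C.tokens :=
    Multiset.filter_eq_self.2 fun (p : ι × ℕ) _ => hT p.1
  rw [h1]
  congr 1
  exact Finset.sum_congr rfl fun i _ => if_pos (hT i)

lemma CTV_step {ι : Type} [Fintype ι] [DecidableEq ι] (tier : ι → ℕ) (T : ℕ)
    (hT : ∀ i, tier i ≤ T) {C C' : Config ι} {l : Lab ι}
    (h : Step tier C l C') :
    CTV tier C' T = CTV tier C T + (if l.isIncr then 1 else 0) := by
  rw [CTV_all tier T hT, CTV_all tier T hT]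
  cases h with
  | incr i =>
    simp only [Lab.isIncr, Finset.sum_update_of_mem (Finset.mem_univ i), if_pos,
      Finset.sum_eq_sum_sdiff_singleton_add (Finset.mem_univ i) C.vals]
    ring
  | create i h =>
    simp only [Lab.isIncr, Finset.sum_update_of_mem (Finset.mem_univ i),
      Finset.sum_eq_sum_sdiff_singleton_add (Finset.mem_univ i) C.vals,
      Multiset.map_cons, Multiset.sum_cons, Bool.false_eq_true, if_false]
    omega
  | acquire i n j hmem hj =>
    simp only [Lab.isIncr, Finset.sum_update_of_mem (Finset.mem_univ j),
      Finset.sum_eq_sum_sdiff_singleton_add (Finset.mem_univ j) C.vals, Bool.false_eq_true, if_false]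
    have : (Multiset.map Prod.snd C.tokens) = Prod.snd ((i, n) : ι × ℕ) ::ₘ Multiset.map Prod.snd (C.tokens.erase (i, n)) := by
      rw [← Multiset.map_cons, Multiset.cons_erase hmem]
    rw [this, Multiset.sum_cons]
    omega
  | skip => simp [Lab.isIncr]

/-- If `T` is an upper bound on all node tiers, then in any configuration
reached by a finite execution (of `t` steps, with labels `lab`) from the
initial configuration, `CTV` at tier `T` equals the number of increment steps
performed: the number of increments globally issued equals the sum of the self
values `vals i` over all nodes plus the sum of the values held in enabled
tokens. -/
theorem CTV_eq_increments {ι : Type} [Fintype ι] [DecidableEq ι]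
    (tier : ι → ℕ) (T : ℕ) (hT : ∀ i, tier i ≤ T)
    (st : ℕ → Config ι) (lab : ℕ → Lab ι) (t : ℕ)
    (hinit : st 0 = initConfig ι)
    (hstep : ∀ n < t, Step tier (st n) (lab n) (st (n + 1))) :
    CTV tier (st t) T =
      ((Finset.range t).filter (fun n => (lab n).isIncr)).card := by
  induction t with
  | zero => simp [hinit, initConfig, CTV]
  | succ t ih =>
    rw [CTV_step tier T hT (hstep t (Nat.lt_succ_self t)),
      ih (fun n hn => hstep n (hn.trans (Nat.lt_succ_self t))),
      Finset.range_add_one, Finset.filter_insert]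
    by_cases h : (lab t).isIncr <;> simp [h, Finset.card_insert_of_notMem, Finset.notMem_range_self]
end

section
/- In the conservation transition system for Handoff Counters, in any configuration C reached by a finite execution from the initial configuration, for every tier bound k, CTV_C(k) is at most the number of increment steps performed in that execution. Consequently, any reported counter value bounded by some CTV_C(k) cannot exceed the number of increments globally issued (the ECDC 'fetch bounded by increments' property). -/

private lemma sum_if_update {ι : Type} [Fintype ι] [DecidableEq ι]
    (tier : ι → ℕ) (v : ι → ℕ) (i : ι) (b k : ℕ) :
    (∑ i', if tier i' ≤ k then Function.update v i b i' else 0) =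
      (if tier i ≤ k then b else 0) +
        ∑ i' ∈ Finset.univ.erase i, (if tier i' ≤ k then v i' else 0) := by
  have h : (fun i' => if tier i' ≤ k then Function.update v i b i' else 0) =
      Function.update (fun i' => if tier i' ≤ k then v i' else 0) i
        (if tier i ≤ k then b else 0) := by
    funext x
    rcases eq_or_ne x i with rfl | hx
    · simp
    · simp [Function.update_of_ne hx]
  rw [h, Finset.sum_update_of_mem (Finset.mem_univ i), ← Finset.erase_eq]

private lemma sum_if_split {ι : Type} [Fintype ι] [DecidableEq ι]
    (tier : ι → ℕ) (v : ι → ℕ) (i : ι) (k : ℕ) :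
    (∑ i', if tier i' ≤ k then v i' else 0) =
      (if tier i ≤ k then v i else 0) +
        ∑ i' ∈ Finset.univ.erase i, (if tier i' ≤ k then v i' else 0) := by
  exact (Finset.add_sum_erase _ _ (Finset.mem_univ i)).symm

private lemma tok_mono {ι : Type} (tier : ι → ℕ) (s : Multiset (ι × ℕ))
    {k k' : ℕ} (hk : k ≤ k') :
    ((s.filter (fun t => tier t.1 ≤ k)).map Prod.snd).sum ≤
      ((s.filter (fun t => tier t.1 ≤ k')).map Prod.snd).sum := by
  have hle : s.filter (fun t => tier t.1 ≤ k) ≤ s.filter (fun t => tier t.1 ≤ k') :=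
    Multiset.monotone_filter_right s (fun t ht => le_trans ht hk)
  obtain ⟨u, hu⟩ := Multiset.le_iff_exists_add.mp hle
  rw [hu]; simp

private lemma sum_if_mono {ι : Type} [Fintype ι] (tier : ι → ℕ) (v : ι → ℕ)
    {k k' : ℕ} (hk : k ≤ k') :
    (∑ i, if tier i ≤ k then v i else 0) ≤ (∑ i, if tier i ≤ k' then v i else 0) := by
  apply Finset.sum_le_sum
  intro i _
  by_cases h : tier i ≤ k
  · simp [h, le_trans h hk]
  · simp [h]

private lemma step_ctv {ι : Type} [Fintype ι] [DecidableEq ι] (tier : ι → ℕ)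
    {C C' : Config ι} {l : Lab ι} (h : Step tier C l C') (k : ℕ) :
    ∃ k', CTV tier C' k ≤ CTV tier C k' + (if l.isIncr then 1 else 0) := by
  cases h with
  | incr i =>
      refine ⟨k, ?_⟩
      simp only [CTV, Lab.isIncr, if_pos]
      rw [sum_if_update, sum_if_split tier C.vals i k]
      by_cases hi : tier i ≤ k <;> simp [hi] <;> omega
  | create i hi =>
      refine ⟨k, ?_⟩
      simp only [CTV, Lab.isIncr]
      have htok : ((((i, C.vals i) ::ₘ C.tokens).filter
            (fun t => tier t.1 ≤ k)).map Prod.snd).sum =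
          (if tier i ≤ k then C.vals i else 0) +
            ((C.tokens.filter (fun t => tier t.1 ≤ k)).map Prod.snd).sum := by
        rw [Multiset.filter_cons]
        by_cases hik : tier i ≤ k <;> simp [hik]
      rw [sum_if_update, sum_if_split tier C.vals i k, htok]
      by_cases hik : tier i ≤ k <;> simp only [hik, if_true, if_false] <;> omega
  | acquire i n j hmem hj =>
      refine ⟨max k (tier i), ?_⟩
      simp only [CTV, Lab.isIncr]
      have hik' : tier i ≤ max k (tier i) := le_max_right _ _
      have htokeq :
          ((C.tokens.filter (fun t => tier t.1 ≤ max k (tier i))).map Prod.snd).sum =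
            n + (((C.tokens.erase (i, n)).filter
              (fun t => tier t.1 ≤ max k (tier i))).map Prod.snd).sum := by
        conv_lhs => rw [← Multiset.cons_erase hmem]
        rw [Multiset.filter_cons]
        simp [hik']
      have h1 : (((C.tokens.erase (i, n)).filter (fun t => tier t.1 ≤ k)).map Prod.snd).sum ≤
          (((C.tokens.erase (i, n)).filter
            (fun t => tier t.1 ≤ max k (tier i))).map Prod.snd).sum :=
        tok_mono tier _ (le_max_left _ _)
      have h2 : (∑ i', if tier i' ≤ k then C.vals i' else 0) ≤
          (∑ i', if tier i' ≤ max k (tier i) then C.vals i' else 0) :=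
        sum_if_mono tier C.vals (le_max_left _ _)
      rw [sum_if_update, htokeq]
      rw [sum_if_split tier C.vals j k] at h2
      by_cases hjk : tier j ≤ k <;>
        simp only [hjk, if_true, if_false] at h2 ⊢ <;> omega
  | skip =>
      exact ⟨k, Nat.le_add_right _ _⟩

/-- In any configuration reached by a finite execution (of `t` steps, with
labels `lab`) from the initial configuration, for every tier bound `k`, the
cumulative tier value `CTV` at tier `k` is at most the number of increment
steps performed in that execution; consequently any reported counter value
bounded by some `CTV_C(k)` cannot exceed the number of increments globally
issued (the ECDC "fetch bounded by increments" property). -/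
theorem CTV_le_increments {ι : Type} [Fintype ι] [DecidableEq ι]
    (tier : ι → ℕ)
    (st : ℕ → Config ι) (lab : ℕ → Lab ι) (t : ℕ)
    (hinit : st 0 = initConfig ι)
    (hstep : ∀ n < t, Step tier (st n) (lab n) (st (n + 1)))
    (k : ℕ) :
    CTV tier (st t) k ≤
      ((Finset.range t).filter (fun n => (lab n).isIncr)).card := by
  revert hstep
  induction t generalizing k with
  | zero =>
      intro _
      rw [hinit]
      simp [CTV, initConfig]
  | succ m ih =>
      intro hstep
      obtain ⟨k', hk'⟩ := step_ctv tier (hstep m (Nat.lt_succ_self m)) k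
      have hih := ih k' (fun n hn => hstep n (Nat.lt_succ_of_lt hn))
      have hcard : ((Finset.range (m+1)).filter (fun n => (lab n).isIncr)).card =
          ((Finset.range m).filter (fun n => (lab n).isIncr)).card +
            (if (lab m).isIncr then 1 else 0) := by
        rw [Finset.range_add_one, Finset.filter_insert]
        by_cases hm : (lab m).isIncr
        · simp [hm, Finset.card_insert_of_notMem Finset.notMem_range_self]
        · simp [hm]
      rw [hcard]
      omega
end

section
/- In the conservation transition system for Handoff Counters, over an infinite execution satisfying the fairness conditions that (f1) every node i with tier_i > 0 whose value vals_i is nonzero eventually performs a create-token step, and (f2) every enabled token is eventually acquired, eventual accounting holds: for every time t, there exists a later time t′ ≥ t such that CTV at tier 0 at time t′ is at least the number of increment steps performed before time t, i.e., CTV_{C^{t′}}(0) ≥ I^t. -/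
theorem Multiset.le_erase_of_notMem {α : Type*} [DecidableEq α] {M s : Multiset α} {a : α}
    (h : M ≤ s) (ha : a ∉ M) : M ≤ s.erase a := by
  by_cases has : a ∈ s
  · rw [← Multiset.cons_erase has, Multiset.le_cons_of_notMem ha] at h
    exact h
  · rwa [Multiset.erase_of_notMem has]

theorem le_update_add {ι : Type*} [DecidableEq ι] (v : ι → ℕ) (j : ι) (n : ℕ) :
    v ≤ Function.update v j (v j + n) :=
  le_update_iff.2 ⟨Nat.le_add_right _ _, fun _ _ ↦ le_rfl⟩

theorem Multiset.sum_map_filter_cons {α M : Type*} [AddCommMonoid M] (p : α → Prop)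
    [DecidablePred p] (f : α → M) (a : α) (s : Multiset α) :
    (((a ::ₘ s).filter p).map f).sum = (if p a then f a else 0) + ((s.filter p).map f).sum := by
  rw [Multiset.filter_cons]
  split_ifs <;> simp

theorem Multiset.sum_map_filter_of_mem {α M : Type*} [DecidableEq α] [AddCommMonoid M]
    (p : α → Prop) [DecidablePred p] (f : α → M) {a : α} {s : Multiset α} (ha : a ∈ s) :
    ((s.filter p).map f).sum = (if p a then f a else 0) + (((s.erase a).filter p).map f).sum := by
  conv_lhs => rw [← Multiset.cons_erase ha]
  exact Multiset.sum_map_filter_cons p f a _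

theorem Finset.sum_ite_update_add {ι M : Type*} [Fintype ι] [DecidableEq ι] [AddCommMonoid M]
    (p : ι → Prop) [DecidablePred p] (v : ι → M) (a : ι) (x : M) :
    (∑ i, if p i then Function.update v a x i else 0) + (if p a then v a else 0) =
      (∑ i, if p i then v i else 0) + (if p a then x else 0) := by
  rw [← Finset.add_sum_erase _ _ (Finset.mem_univ a),
    ← Finset.add_sum_erase _ (fun i ↦ if p i then v i else 0) (Finset.mem_univ a),
    Finset.sum_congr rfl fun i hi ↦ by rw [Function.update_of_ne (Finset.ne_of_mem_erase hi)],
    Function.update_self]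
  ac_rfl

section CTV

variable {ι : Type} [Fintype ι] (tier : ι → ℕ) (C : Config ι) (k : ℕ)

theorem CTV_incr [DecidableEq ι] (i : ι) :
    CTV tier ⟨Function.update C.vals i (C.vals i + 1), C.tokens⟩ k =
      CTV tier C k + if tier i ≤ k then 1 else 0 := by
  have := Finset.sum_ite_update_add (tier · ≤ k) C.vals i (C.vals i + 1)
  unfold CTV
  dsimp only
  split_ifs at this ⊢ <;> omega

theorem CTV_create [DecidableEq ι] (i : ι) :
    CTV tier ⟨Function.update C.vals i 0, (i, C.vals i) ::ₘ C.tokens⟩ k = CTV tier C k := by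
  have := Finset.sum_ite_update_add (tier · ≤ k) C.vals i 0
  unfold CTV
  dsimp only
  rw [Multiset.sum_map_filter_cons]
  split_ifs at this ⊢ <;> omega

theorem CTV_acquire [DecidableEq ι] {i j : ι} {n : ℕ} (hmem : (i, n) ∈ C.tokens) :
    CTV tier ⟨Function.update C.vals j (C.vals j + n), C.tokens.erase (i, n)⟩ k +
        (if tier i ≤ k then n else 0) =
      CTV tier C k + if tier j ≤ k then n else 0 := by
  have := Finset.sum_ite_update_add (tier · ≤ k) C.vals j (C.vals j + n)
  unfold CTV
  dsimp only
  rw [Multiset.sum_map_filter_of_mem _ _ hmem]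
  split_ifs at this ⊢ <;> omega

theorem CTV_succ :
    CTV tier C (k + 1) = CTV tier C k + ∑ i ∈ Finset.univ.filter (tier · = k + 1), C.vals i +
      ((C.tokens.filter (tier ·.1 = k + 1)).map Prod.snd).sum := by
  have hvals : (∑ i, if tier i ≤ k + 1 then C.vals i else 0) =
      (∑ i, if tier i ≤ k then C.vals i else 0) + ∑ i, if tier i = k + 1 then C.vals i else 0 := by
    rw [← Finset.sum_add_distrib]
    exact Finset.sum_congr rfl fun i _ ↦ by split_ifs <;> omega
  have htokens : ∀ s : Multiset (ι × ℕ), ((s.filter (tier ·.1 ≤ k + 1)).map Prod.snd).sum =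
      ((s.filter (tier ·.1 ≤ k)).map Prod.snd).sum +
        ((s.filter (tier ·.1 = k + 1)).map Prod.snd).sum := by
    intro s
    induction s using Multiset.induction_on with
    | empty => simp
    | cons a s ih =>
      simp only [Multiset.sum_map_filter_cons, ih]
      split_ifs <;> omega
  unfold CTV
  rw [hvals, htokens, Finset.sum_filter]
  ring

end CTV

section Step

variable {ι : Type} [Fintype ι] [DecidableEq ι] {tier : ι → ℕ} {C C' : Config ι} {l : Lab ι}

theorem Step.CTV_le (h : Step tier C l C') (k : ℕ) : CTV tier C k ≤ CTV tier C' k := by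
  cases h with
  | incr i => rw [CTV_incr]; omega
  | create i => rw [CTV_create]
  | acquire i n j hmem hj =>
    have := CTV_acquire tier C k (j := j) hmem
    split_ifs at this <;> omega
  | skip => rfl

theorem Step.CTV_eq_of_forall_tier_le {T : ℕ} (h : Step tier C l C') (hT : ∀ i, tier i ≤ T) :
    CTV tier C' T = CTV tier C T + if l.isIncr then 1 else 0 := by
  cases h with
  | incr i => simp [CTV_incr, hT i, Lab.isIncr]
  | create i => simp [CTV_create, Lab.isIncr]
  | acquire i n j hmem hj =>
    simpa [hT i, hT j, Lab.isIncr] using CTV_acquire tier C T (j := j) hmem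
  | skip => simp [Lab.isIncr]

end Step

section Execution

variable {ι : Type} [Fintype ι] [DecidableEq ι] {tier : ι → ℕ}
  {st : ℕ → Config ι} {lab : ℕ → Lab ι}

theorem CTV_eq_card_incr {T : ℕ} (hinit : st 0 = initConfig ι)
    (hstep : ∀ n, Step tier (st n) (lab n) (st (n + 1))) (hT : ∀ i, tier i ≤ T) (t : ℕ) :
    CTV tier (st t) T = ((Finset.range t).filter (fun n ↦ (lab n).isIncr)).card := by
  induction t with
  | zero => simp [hinit, initConfig, CTV]
  | succ t ih =>
    rw [(hstep t).CTV_eq_of_forall_tier_le hT, ih, Finset.card_filter, Finset.card_filter,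
      Finset.sum_range_succ]

end Execution

section Covers

variable {ι : Type} [Fintype ι]

/-- `c` is accounted for at tiers `≤ k` once the values of the nodes `s` and of the tokens `M`,
all of tier `k + 1`, have been handed down. -/
structure Covers (tier : ι → ℕ) (k c : ℕ) (C : Config ι) (s : Finset ι)
    (M : Multiset (ι × ℕ)) : Prop where
  tier_of_mem_nodes : ∀ i ∈ s, tier i = k + 1
  tier_of_mem_tokens : ∀ p ∈ M, tier p.1 = k + 1
  le_tokens : M ≤ C.tokens
  le_sum : c ≤ CTV tier C k + ∑ i ∈ s, C.vals i + (M.map Prod.snd).sum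

def Lab.Moves (s : Finset ι) (M : Multiset (ι × ℕ)) : Lab ι → Prop
  | .create i => i ∈ s
  | .acquire i n _ => (i, n) ∈ M
  | _ => False

variable {tier : ι → ℕ} {k c : ℕ} {C C' : Config ι} {l : Lab ι} {s : Finset ι}
  {M : Multiset (ι × ℕ)}

theorem Covers.mono (hc : Covers tier k c C s M) (hCTV : CTV tier C k ≤ CTV tier C' k)
    (hvals : ∀ i ∈ s, C.vals i ≤ C'.vals i) (htokens : M ≤ C'.tokens) :
    Covers tier k c C' s M where
  tier_of_mem_nodes := hc.tier_of_mem_nodes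
  tier_of_mem_tokens := hc.tier_of_mem_tokens
  le_tokens := htokens
  le_sum := by
    have := Finset.sum_le_sum hvals
    have := hc.le_sum
    omega

theorem Covers.exists_moves {st : ℕ → Config ι} {lab : ℕ → Lab ι} {t : ℕ}
    (hfair₁ : ∀ i n, 0 < tier i → (st n).vals i ≠ 0 → ∃ m ≥ n, lab m = Lab.create i)
    (hfair₂ : ∀ n, ∀ tok ∈ (st n).tokens, ∃ m ≥ n, ∃ j, lab m = Lab.acquire tok.1 tok.2 j)
    (hc : Covers tier k c (st t) s M) (hpending : ¬ ((∀ i ∈ s, (st t).vals i = 0) ∧ M = 0)) :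
    ∃ r, t ≤ r ∧ (lab r).Moves s M := by
  by_cases hvals : ∃ i ∈ s, (st t).vals i ≠ 0
  · obtain ⟨i, hi, hv⟩ := hvals
    obtain ⟨r, hr, hl⟩ := hfair₁ i t (by simp [hc.tier_of_mem_nodes i hi]) hv
    exact ⟨r, hr, by simpa [hl, Lab.Moves]⟩
  · obtain ⟨p, hp⟩ := Multiset.exists_mem_of_ne_zero fun hM ↦ hpending ⟨by simpa using hvals, hM⟩
    obtain ⟨r, hr, j, hl⟩ := hfair₂ t p (Multiset.mem_of_le hc.le_tokens hp)
    exact ⟨r, hr, by simpa [hl, Lab.Moves]⟩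

variable [DecidableEq ι]

theorem Step.covers_of_not_moves (h : Step tier C l C') (hl : ¬ l.Moves s M)
    (hc : Covers tier k c C s M) : Covers tier k c C' s M := by
  have hCTV := h.CTV_le k
  cases h with
  | incr i => exact hc.mono hCTV (fun i' _ ↦ le_update_add C.vals i 1 i') hc.le_tokens
  | create i =>
    refine hc.mono hCTV (fun i' hi' ↦ ?_) (hc.le_tokens.trans (Multiset.le_cons_self _ _))
    exact (Function.update_of_ne (by rintro rfl; exact hl hi') 0 C.vals).ge
  | acquire i n j hmem hj =>
    exact hc.mono hCTV (fun i' _ ↦ le_update_add C.vals j n i')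
      (Multiset.le_erase_of_notMem hc.le_tokens hl)
  | skip => exact hc

theorem Step.covers_of_moves (h : Step tier C l C') (hl : l.Moves s M)
    (hc : Covers tier k c C s M) : ∃ s' M', 2 * s'.card + Multiset.card M' <
      2 * s.card + Multiset.card M ∧ Covers tier k c C' s' M' := by
  cases h with
  | incr i => exact hl.elim
  | create i =>
    refine ⟨s.erase i, (i, C.vals i) ::ₘ M, ?_, ?_⟩
    · have := Finset.card_pos.2 ⟨i, hl⟩
      rw [Finset.card_erase_of_mem hl, Multiset.card_cons]
      omega
    refine ⟨fun i' hi' ↦ hc.tier_of_mem_nodes i' (Finset.mem_of_mem_erase hi'), ?_,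
      Multiset.cons_le_cons _ hc.le_tokens, ?_⟩
    · intro p hp
      rcases Multiset.mem_cons.1 hp with rfl | hp
      exacts [hc.tier_of_mem_nodes i hl, hc.tier_of_mem_tokens p hp]
    · have hrest : ∑ i' ∈ s.erase i, Function.update C.vals i 0 i' = ∑ i' ∈ s.erase i, C.vals i' :=
        Finset.sum_congr rfl fun i' hi' ↦ Function.update_of_ne (Finset.ne_of_mem_erase hi') _ _
      have := hc.le_sum
      rw [← Finset.add_sum_erase s _ hl] at this
      simp only [CTV_create, hrest, Multiset.map_cons, Multiset.sum_cons]
      omega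
  | acquire i n j hmem hj =>
    have hi : tier i = k + 1 := hc.tier_of_mem_tokens _ hl
    refine ⟨s, M.erase (i, n), ?_, hc.tier_of_mem_nodes,
      fun p hp ↦ hc.tier_of_mem_tokens p (Multiset.mem_of_mem_erase hp),
      Multiset.erase_le_erase _ hc.le_tokens, ?_⟩
    · have := Multiset.card_pos_iff_exists_mem.2 ⟨_, hl⟩
      rw [Multiset.card_erase_of_mem hl, Nat.pred_eq_sub_one]
      omega
    · have hgain := CTV_acquire tier C k (j := j) hmem
      have hvals := Finset.sum_le_sum fun i' (_ : i' ∈ s) ↦ le_update_add C.vals j n i'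
      have hM := Multiset.sum_map_erase (f := Prod.snd) hl
      have := hc.le_sum
      rw [if_neg (by omega), if_pos (by omega)] at hgain
      dsimp only at hM ⊢
      omega
  | skip => exact hl.elim

end Covers

section Descent

variable {ι : Type} [Fintype ι] [DecidableEq ι] {tier : ι → ℕ}
  {st : ℕ → Config ι} {lab : ℕ → Lab ι}

theorem Covers.of_forall_not_moves (hstep : ∀ n, Step tier (st n) (lab n) (st (n + 1)))
    {k c t r : ℕ} {s : Finset ι} {M : Multiset (ι × ℕ)} (htr : t ≤ r)
    (hc : Covers tier k c (st t) s M) (hidle : ∀ u, t ≤ u → u < r → ¬ (lab u).Moves s M) :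
    Covers tier k c (st r) s M := by
  induction r, htr using Nat.le_induction with
  | base => exact hc
  | succ r htr ih =>
    exact (hstep r).covers_of_not_moves (hidle r htr r.lt_succ_self)
      (ih fun u htu hur ↦ hidle u htu (hur.trans r.lt_succ_self))

/-- Induction on `2 * s.card + M.card`, which drops at the first step moving a tracked value
(a token creation trades a node for a token). -/
theorem exists_le_CTV_of_covers (hstep : ∀ n, Step tier (st n) (lab n) (st (n + 1)))
    (hfair₁ : ∀ i n, 0 < tier i → (st n).vals i ≠ 0 → ∃ m ≥ n, lab m = Lab.create i)
    (hfair₂ : ∀ n, ∀ tok ∈ (st n).tokens, ∃ m ≥ n, ∃ j, lab m = Lab.acquire tok.1 tok.2 j)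
    {k c t : ℕ} {s : Finset ι} {M : Multiset (ι × ℕ)} (hc : Covers tier k c (st t) s M) :
    ∃ t' ≥ t, c ≤ CTV tier (st t') k := by
  induction hN : 2 * s.card + Multiset.card M using Nat.strong_induction_on
    generalizing s M t with
  | _ N ih =>
  by_cases hdone : (∀ i ∈ s, (st t).vals i = 0) ∧ M = 0
  · refine ⟨t, le_rfl, ?_⟩
    simpa [Finset.sum_eq_zero hdone.1, hdone.2] using hc.le_sum
  classical
  have hex := hc.exists_moves hfair₁ hfair₂ hdone
  obtain ⟨htr, hmoves⟩ := Nat.find_spec hex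
  have hcr := hc.of_forall_not_moves hstep htr fun u htu hur hu ↦ Nat.find_min hex hur ⟨htu, hu⟩
  obtain ⟨s', M', hlt, hc'⟩ := (hstep _).covers_of_moves hmoves hcr
  obtain ⟨t', ht', hle⟩ := ih _ (hN ▸ hlt) hc' rfl
  exact ⟨t', by omega, hle⟩

theorem exists_CTV_succ_le (hstep : ∀ n, Step tier (st n) (lab n) (st (n + 1)))
    (hfair₁ : ∀ i n, 0 < tier i → (st n).vals i ≠ 0 → ∃ m ≥ n, lab m = Lab.create i)
    (hfair₂ : ∀ n, ∀ tok ∈ (st n).tokens, ∃ m ≥ n, ∃ j, lab m = Lab.acquire tok.1 tok.2 j)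
    (k t : ℕ) : ∃ t' ≥ t, CTV tier (st t) (k + 1) ≤ CTV tier (st t') k :=
  exists_le_CTV_of_covers hstep hfair₁ hfair₂
    { tier_of_mem_nodes := fun _ hi ↦ (Finset.mem_filter.1 hi).2
      tier_of_mem_tokens := fun _ hp ↦ (Multiset.mem_filter.1 hp).2
      le_tokens := Multiset.filter_le _ _
      le_sum := (CTV_succ tier (st t) k).le }

theorem exists_CTV_le_CTV_zero (hstep : ∀ n, Step tier (st n) (lab n) (st (n + 1)))
    (hfair₁ : ∀ i n, 0 < tier i → (st n).vals i ≠ 0 → ∃ m ≥ n, lab m = Lab.create i)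
    (hfair₂ : ∀ n, ∀ tok ∈ (st n).tokens, ∃ m ≥ n, ∃ j, lab m = Lab.acquire tok.1 tok.2 j)
    (k t : ℕ) : ∃ t' ≥ t, CTV tier (st t) k ≤ CTV tier (st t') 0 := by
  induction k generalizing t with
  | zero => exact ⟨t, le_rfl, le_rfl⟩
  | succ k ih =>
    obtain ⟨t₁, ht₁, h₁⟩ := exists_CTV_succ_le hstep hfair₁ hfair₂ k t
    obtain ⟨t₂, ht₂, h₂⟩ := ih t₁
    exact ⟨t₂, ht₁.trans ht₂, h₁.trans h₂⟩

end Descent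

/-- Eventual accounting: over an infinite execution of the conservation
transition system (tiers bounded above by `T`), satisfying the fairness
conditions that (f1) every node `i` with `tier i > 0` whose value `vals i` is
nonzero eventually performs a create-token step, and (f2) every enabled token
is eventually acquired, for every time `t` there is a later time `t' ≥ t` such
that the cumulative tier value at tier 0 at time `t'` is at least the number
`I^t` of increment steps performed before time `t`. -/
theorem eventual_accounting {ι : Type} [Fintype ι] [DecidableEq ι]
    (tier : ι → ℕ) (T : ℕ) (hT : ∀ i, tier i ≤ T)
    (st : ℕ → Config ι) (lab : ℕ → Lab ι)
    (hinit : st 0 = initConfig ι)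
    (hstep : ∀ n, Step tier (st n) (lab n) (st (n + 1)))
    -- (f1) a node of positive tier with a nonzero value eventually creates a token
    (hfair₁ : ∀ i n, 0 < tier i → (st n).vals i ≠ 0 →
      ∃ m ≥ n, lab m = Lab.create i)
    -- (f2) every enabled token is eventually acquired
    (hfair₂ : ∀ n, ∀ tok ∈ (st n).tokens,
      ∃ m ≥ n, ∃ j, lab m = Lab.acquire tok.1 tok.2 j) :
    ∀ t, ∃ t' ≥ t,
      ((Finset.range t).filter (fun n => (lab n).isIncr)).card ≤
        CTV tier (st t') 0 := by
  intro t
  obtain ⟨t', ht', h⟩ := exists_CTV_le_CTV_zero hstep hfair₁ hfair₂ T t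
  exact ⟨t', ht', (CTV_eq_card_incr hinit hstep hT t).ge.trans h⟩
end
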